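/- Let β satisfy the Lamé equations on ℝ^N, let ξ_i : ℝ^N → ℝ^M solve the direct system, set ξ*_i := (∂ξ_i/∂u_i + Σ_{k≠i}ξ_kβ_{ki})ᵀ, and let Ω := Ω(ξ,ξ*) be an invertible potential with ∂Ω/∂u_i = ξ_i⊗ξ*_i satisfying Ω + Ωᵀ = Σ_k ξ_k⊗ξ_kᵀ. Then β̂_{ij} := β_{ij} − ⟨ξ*_j, Ω^{-1}ξ_i⟩ satisfies the full Lamé equations: (1) ∂β̂_{ij}/∂u_k = β̂_{ik}β̂_{kj} for pairwise distinct i,j,k, and (2) ∂β̂_{ij}/∂u_i + ∂β̂_{ji}/∂u_j + Σ_{k≠i,j} β̂_{ki}β̂_{kj} = 0 for i ≠ j. -/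

import Mathlib

open scoped BigOperators

/-- Partial derivative of a scalar function on `ℝ^N` in the `i`-th coordinate direction. -/
noncomputable def pd {N : ℕ} (i : Fin N) (f : (Fin N → ℝ) → ℝ) (u : Fin N → ℝ) : ℝ :=
  fderiv ℝ f u (Pi.single i 1)

variable {N : ℕ}

lemma contDiff_pd {f : (Fin N → ℝ) → ℝ} (hf : ContDiff ℝ (⊤ : ℕ∞) f) (i : Fin N) :
    ContDiff ℝ (⊤ : ℕ∞) (fun u => pd i f u) :=
  (hf.fderiv_right (by simp)).clm_apply contDiff_const

lemma pd_comm {f : (Fin N → ℝ) → ℝ} (hf : ContDiff ℝ (⊤ : ℕ∞) f) (i j : Fin N) (u : Fin N → ℝ) :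
    pd i (fun v => pd j f v) u = pd j (fun v => pd i f v) u := by
  have hsym : IsSymmSndFDerivAt ℝ f u :=
    hf.contDiffAt.isSymmSndFDerivAt (by rw [minSmoothness_of_isRCLikeNormedField, ← WithTop.coe_ofNat]; exact WithTop.coe_le_coe.mpr le_top)
  have hd : DifferentiableAt ℝ (fderiv ℝ f) u :=
    ((hf.fderiv_right (m := 1) (WithTop.coe_le_coe.mpr le_top)).differentiable (by simp)).differentiableAt
  have key : ∀ w : Fin N → ℝ, fderiv ℝ (fun v => fderiv ℝ f v w) u
      = (fderiv ℝ (fderiv ℝ f) u).flip w := by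
    intro w
    have := fderiv_clm_apply (c := fderiv ℝ f) (u := fun _ => w) hd (differentiableAt_const w)
    simp only [fderiv_fun_const, Pi.zero_apply] at this
    exact this.trans (by ext v; simp)
  show fderiv ℝ (fun v => fderiv ℝ f v (Pi.single j 1)) u (Pi.single i 1) =
       fderiv ℝ (fun v => fderiv ℝ f v (Pi.single i 1)) u (Pi.single j 1)
  rw [key, key]
  exact hsym _ _

lemma pd_add {f g : (Fin N → ℝ) → ℝ} {u : Fin N → ℝ} (hf : DifferentiableAt ℝ f u)
    (hg : DifferentiableAt ℝ g u) (i : Fin N) :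
    pd i (fun v => f v + g v) u = pd i f u + pd i g u := by
  unfold pd; rw [fderiv_fun_add hf hg]; rfl

lemma pd_sub {f g : (Fin N → ℝ) → ℝ} {u : Fin N → ℝ} (hf : DifferentiableAt ℝ f u)
    (hg : DifferentiableAt ℝ g u) (i : Fin N) :
    pd i (fun v => f v - g v) u = pd i f u - pd i g u := by
  unfold pd; rw [fderiv_fun_sub hf hg]; rfl

lemma pd_mul {f g : (Fin N → ℝ) → ℝ} {u : Fin N → ℝ} (hf : DifferentiableAt ℝ f u)
    (hg : DifferentiableAt ℝ g u) (i : Fin N) :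
    pd i (fun v => f v * g v) u = pd i f u * g u + f u * pd i g u := by
  unfold pd; rw [fderiv_fun_mul hf hg]
  simp [smul_eq_mul]; ring

lemma pd_const (i : Fin N) (c : ℝ) (u : Fin N → ℝ) : pd i (fun _ => c) u = 0 := by
  unfold pd; rw [fderiv_fun_const]; rfl

lemma pd_sum {ι : Type*} {s : Finset ι} {f : ι → (Fin N → ℝ) → ℝ} {u : Fin N → ℝ}
    (hf : ∀ k ∈ s, DifferentiableAt ℝ (f k) u) (i : Fin N) :
    pd i (fun v => ∑ k ∈ s, f k v) u = ∑ k ∈ s, pd i (f k) u := by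
  unfold pd; rw [fderiv_fun_sum hf]; simp


section Rib

variable {N M : ℕ}
  (β : Fin N → Fin N → (Fin N → ℝ) → ℝ)
  (ξ : Fin N → (Fin N → ℝ) → Fin M → ℝ)
  (ξs : Fin N → (Fin N → ℝ) → Fin M → ℝ)
  (Ω Ωinv : (Fin N → ℝ) → Fin M → Fin M → ℝ)

/-- `Sq i j u = ⟨ξ*_j, Ω⁻¹ ξ_i⟩`. -/
def Sq (i j : Fin N) (u : Fin N → ℝ) : ℝ :=
  ∑ a, ∑ b, ξs j u a * Ωinv u a b * ξ i u b

/-- `Tq i j u = ⟨ξ*_j, Ω⁻¹ ξ*_i⟩`. -/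
def Tq (i j : Fin N) (u : Fin N → ℝ) : ℝ :=
  ∑ a, ∑ b, ξs j u a * Ωinv u a b * ξs i u b

/-- `theta i u a = (Ω⁻¹ ξ_i) a`. -/
def theta (i : Fin N) (u : Fin N → ℝ) (a : Fin M) : ℝ := ∑ c, Ωinv u a c * ξ i u c

/-- `eta i u b = (ξ*_iᵀ Ω⁻¹) b`. -/
def eta (i : Fin N) (u : Fin N → ℝ) (b : Fin M) : ℝ := ∑ c, ξs i u c * Ωinv u c b


lemma xis_smooth
    (hβ : ∀ i j, i ≠ j → ContDiff ℝ (⊤ : ℕ∞) (β i j))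
    (hξ : ∀ i a, ContDiff ℝ (⊤ : ℕ∞) (fun u => ξ i u a))
    (hξs : ∀ i (u : Fin N → ℝ) (a : Fin M),
      ξs i u a = pd i (fun v => ξ i v a) u
        + ∑ k ∈ Finset.univ.filter (fun k => k ≠ i), ξ k u a * β k i u) :
    ∀ i a, ContDiff ℝ (⊤ : ℕ∞) (fun u => ξs i u a) := by
  intro i a
  have : (fun u => ξs i u a) = (fun u => pd i (fun v => ξ i v a) u
      + ∑ k ∈ Finset.univ.filter (fun k => k ≠ i), ξ k u a * β k i u) :=
    funext fun u => hξs i u a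
  rw [this]
  exact (contDiff_pd (hξ i a) i).add <| ContDiff.sum fun k hk =>
    (hξ k a).mul (hβ k i (by simpa using hk))


lemma sum_split_ne {i j : Fin N} (hij : i ≠ j) (g : Fin N → ℝ) :
    ∑ k ∈ Finset.univ.filter (fun k => k ≠ j), g k
      = g i + ∑ k ∈ Finset.univ.filter (fun k => k ≠ i ∧ k ≠ j), g k := by
  have hset : Finset.univ.filter (fun k : Fin N => k ≠ j)
      = insert i (Finset.univ.filter (fun k => k ≠ i ∧ k ≠ j)) := by
    ext k
    simp only [Finset.mem_filter, Finset.mem_univ, true_and, Finset.mem_insert]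
    constructor
    · intro hk; by_cases h : k = i
      · exact Or.inl h
      · exact Or.inr ⟨h, hk⟩
    · rintro (rfl | ⟨_, hk⟩)
      · exact hij
      · exact hk
  rw [hset, Finset.sum_insert (by simp)]

lemma sum_split_univ {i j : Fin N} (hij : i ≠ j) (g : Fin N → ℝ) :
    ∑ k, g k = g i + g j
      + ∑ k ∈ Finset.univ.filter (fun k => k ≠ i ∧ k ≠ j), g k := by
  have h1 : ∑ k, g k = g j + ∑ k ∈ Finset.univ.filter (fun k => k ≠ j), g k := by
    rw [← Finset.sum_filter_add_sum_filter_not Finset.univ (fun k => k = j)]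
    congr 1
    rw [Finset.filter_eq', if_pos (Finset.mem_univ j), Finset.sum_singleton]
  rw [h1, sum_split_ne hij g]; ring

lemma adjoint_system
    (hβ : ∀ i j, i ≠ j → ContDiff ℝ (⊤ : ℕ∞) (β i j))
    (hξ : ∀ i a, ContDiff ℝ (⊤ : ℕ∞) (fun u => ξ i u a))
    (hLame1 : ∀ i j k, i ≠ j → j ≠ k → i ≠ k → ∀ u : Fin N → ℝ,
      pd k (β i j) u = β i k u * β k j u)
    (hLame2 : ∀ i j, i ≠ j → ∀ u : Fin N → ℝ,
      pd i (β i j) u + pd j (β j i) u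
        + ∑ k ∈ Finset.univ.filter (fun k => k ≠ i ∧ k ≠ j), β k i u * β k j u = 0)
    (hdirect : ∀ i j, i ≠ j → ∀ (u : Fin N → ℝ) (a : Fin M),
      pd i (fun v => ξ j v a) u = β j i u * ξ i u a)
    (hξs : ∀ i (u : Fin N → ℝ) (a : Fin M),
      ξs i u a = pd i (fun v => ξ i v a) u
        + ∑ k ∈ Finset.univ.filter (fun k => k ≠ i), ξ k u a * β k i u) :
    ∀ i j, i ≠ j → ∀ (u : Fin N → ℝ) (a : Fin M),
      pd i (fun v => ξs j v a) u = β i j u * ξs i u a := by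
  intro i j hij u a
  have dβ : ∀ p q, p ≠ q → ∀ v, DifferentiableAt ℝ (β p q) v :=
    fun p q h v => ((hβ p q h).differentiable (by simp)).differentiableAt
  have dξ : ∀ p c v, DifferentiableAt ℝ (fun w => ξ p w c) v :=
    fun p c v => ((hξ p c).differentiable (by simp)).differentiableAt
  have dpd : ∀ p q c v, DifferentiableAt ℝ (fun w => pd p (fun x => ξ q x c) w) v :=
    fun p q c v => ((contDiff_pd (hξ q c) p).differentiable (by simp)).differentiableAt
  have e1 : (fun v => ξs j v a) = (fun v => pd j (fun w => ξ j w a) v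
      + ∑ k ∈ Finset.univ.filter (fun k => k ≠ j), ξ k v a * β k j v) :=
    funext fun v => hξs j v a
  have dsum : DifferentiableAt ℝ
      (fun v => ∑ k ∈ Finset.univ.filter (fun k : Fin N => k ≠ j), ξ k v a * β k j v) u := by
    apply DifferentiableAt.fun_sum
    intro k hk
    exact (dξ k a u).mul (dβ k j (by simpa using hk) u)
  rw [e1, pd_add (dpd j j a u) dsum i]
  have t1 : pd i (fun v => pd j (fun w => ξ j w a) v) u
      = pd j (β j i) u * ξ i u a + β j i u * (β i j u * ξ j u a) := by
    rw [pd_comm (hξ j a) i j]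
    have h2 : (fun v => pd i (fun w => ξ j w a) v) = fun v => β j i v * ξ i v a :=
      funext fun v => hdirect i j hij v a
    rw [h2, pd_mul (dβ j i hij.symm u) (dξ i a u) j, hdirect j i hij.symm u a]
  have t2 : pd i (fun v => ∑ k ∈ Finset.univ.filter (fun k : Fin N => k ≠ j),
        ξ k v a * β k j v) u
      = (pd i (fun w => ξ i w a) u * β i j u + ξ i u a * pd i (β i j) u)
        + (ξ i u a * ∑ k ∈ Finset.univ.filter (fun k => k ≠ i ∧ k ≠ j), β k i u * β k j u
          + β i j u * ∑ k ∈ Finset.univ.filter (fun k => k ≠ i ∧ k ≠ j), ξ k u a * β k i u) := by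
    rw [pd_sum (fun k hk => (dξ k a u).fun_mul (dβ k j (by simpa using hk) u)) i]
    have hterm : ∀ k ∈ Finset.univ.filter (fun k : Fin N => k ≠ j),
        pd i (fun v => ξ k v a * β k j v) u
          = pd i (fun w => ξ k w a) u * β k j u + ξ k u a * pd i (β k j) u :=
      fun k hk => pd_mul (dξ k a u) (dβ k j (by simpa using hk) u) i
    rw [Finset.sum_congr rfl hterm, sum_split_ne hij]
    have hrest : ∀ k ∈ Finset.univ.filter (fun k : Fin N => k ≠ i ∧ k ≠ j),
        pd i (fun w => ξ k w a) u * β k j u + ξ k u a * pd i (β k j) u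
          = ξ i u a * (β k i u * β k j u) + β i j u * (ξ k u a * β k i u) := by
      intro k hk
      simp only [Finset.mem_filter, Finset.mem_univ, true_and] at hk
      rw [hdirect i k (fun h => hk.1 h.symm) u a,
        hLame1 k j i hk.2 (fun h => hij h.symm) hk.1 u]
      ring
    rw [Finset.sum_congr rfl hrest, Finset.sum_add_distrib, ← Finset.mul_sum, ← Finset.mul_sum]
  rw [t1, t2, hξs i u a, sum_split_ne hij.symm (fun k => ξ k u a * β k i u)]
  have hfc : Finset.univ.filter (fun k : Fin N => k ≠ j ∧ k ≠ i)
      = Finset.univ.filter (fun k => k ≠ i ∧ k ≠ j) := by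
    apply Finset.filter_congr; intro k _; simp [and_comm]
  rw [hfc]
  linear_combination ξ i u a * hLame2 i j hij u


lemma pd_Omega_inv
    (hξ : ∀ i a, ContDiff ℝ (⊤ : ℕ∞) (fun u => ξ i u a))
    (hΩsm : ∀ a b, ContDiff ℝ (⊤ : ℕ∞) (fun u => Ω u a b))
    (hΩinvsm : ∀ a b, ContDiff ℝ (⊤ : ℕ∞) (fun u => Ωinv u a b))
    (hΩ : ∀ i (u : Fin N → ℝ) (a b : Fin M),
      pd i (fun v => Ω v a b) u = ξ i u a * ξs i u b)
    (hinv₁ : ∀ (u : Fin N → ℝ) (a b : Fin M),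
      ∑ c, Ω u a c * Ωinv u c b = if a = b then 1 else 0)
    (hinv₂ : ∀ (u : Fin N → ℝ) (a b : Fin M),
      ∑ c, Ωinv u a c * Ω u c b = if a = b then 1 else 0) :
    ∀ i (u : Fin N → ℝ) (a d : Fin M),
      pd i (fun v => Ωinv v a d) u
        = -(theta ξ Ωinv i u a * eta ξs Ωinv i u d) := by
  intro i u a d
  have dΩ : ∀ c b v, DifferentiableAt ℝ (fun w => Ω w c b) v :=
    fun c b v => ((hΩsm c b).differentiable (by simp)).differentiableAt
  have dΩinv : ∀ c b v, DifferentiableAt ℝ (fun w => Ωinv w c b) v :=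
    fun c b v => ((hΩinvsm c b).differentiable (by simp)).differentiableAt
  have hsum : ∀ b, ∑ c, pd i (fun v => Ωinv v a c) u * Ω u c b
      = -(theta ξ Ωinv i u a * ξs i u b) := by
    intro b
    have h0 : pd i (fun v => ∑ c, Ωinv v a c * Ω v c b) u = 0 := by
      have : (fun v => ∑ c, Ωinv v a c * Ω v c b)
          = fun _ => if a = b then (1:ℝ) else 0 := funext fun v => hinv₂ v a b
      rw [this, pd_const]
    rw [pd_sum (fun c _ => (dΩinv a c u).fun_mul (dΩ c b u)) i] at h0
    have hterm : ∀ c ∈ Finset.univ, pd i (fun v => Ωinv v a c * Ω v c b) u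
        = pd i (fun v => Ωinv v a c) u * Ω u c b + Ωinv u a c * (ξ i u c * ξs i u b) :=
      fun c _ => by rw [pd_mul (dΩinv a c u) (dΩ c b u) i, hΩ i u c b]
    rw [Finset.sum_congr rfl hterm, Finset.sum_add_distrib] at h0
    have h1 : ∑ c, Ωinv u a c * (ξ i u c * ξs i u b)
        = theta ξ Ωinv i u a * ξs i u b := by
      rw [theta, Finset.sum_mul]
      exact Finset.sum_congr rfl fun c _ => by ring
    linarith [h0, h1]
  have hdelta : pd i (fun v => Ωinv v a d) u
      = ∑ c, pd i (fun v => Ωinv v a c) u * (if c = d then 1 else 0) := by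
    simp
  rw [hdelta]
  have : ∀ c, (if c = d then (1:ℝ) else 0) = ∑ b, Ω u c b * Ωinv u b d :=
    fun c => (hinv₁ u c d).symm
  calc ∑ c, pd i (fun v => Ωinv v a c) u * (if c = d then (1:ℝ) else 0)
      = ∑ c, ∑ b, (pd i (fun v => Ωinv v a c) u * Ω u c b) * Ωinv u b d := by
        refine Finset.sum_congr rfl fun c _ => ?_
        rw [this c, Finset.mul_sum]
        exact Finset.sum_congr rfl fun b _ => by ring
    _ = ∑ b, (∑ c, pd i (fun v => Ωinv v a c) u * Ω u c b) * Ωinv u b d := by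
        rw [Finset.sum_comm]
        exact Finset.sum_congr rfl fun b _ => (Finset.sum_mul ..).symm
    _ = -(theta ξ Ωinv i u a * eta ξs Ωinv i u d) := by
        rw [eta]
        simp only [hsum]
        rw [Finset.mul_sum, ← Finset.sum_neg_distrib]
        exact Finset.sum_congr rfl fun b _ => by ring


lemma omegainv_symm
    (hconstr : ∀ (u : Fin N → ℝ) (a b : Fin M),
      Ω u a b + Ω u b a = ∑ k, ξ k u a * ξ k u b)
    (hinv₂ : ∀ (u : Fin N → ℝ) (a b : Fin M),
      ∑ c, Ωinv u a c * Ω u c b = if a = b then 1 else 0) :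
    ∀ (u : Fin N → ℝ) (a b : Fin M),
      Ωinv u a b + Ωinv u b a = ∑ k, theta ξ Ωinv k u a * theta ξ Ωinv k u b := by
  intro u a b
  have A : ∑ c, ∑ d, Ωinv u a c * Ωinv u b d * Ω u c d = Ωinv u b a := by
    rw [Finset.sum_comm]
    have h : ∀ d ∈ Finset.univ, ∑ c, Ωinv u a c * Ωinv u b d * Ω u c d
        = Ωinv u b d * (if a = d then 1 else 0) := by
      intro d _
      rw [← hinv₂ u a d, Finset.mul_sum]
      exact Finset.sum_congr rfl fun c _ => by ring
    rw [Finset.sum_congr rfl h]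
    simp
  have B : ∑ c, ∑ d, Ωinv u a c * Ωinv u b d * Ω u d c = Ωinv u a b := by
    have h : ∀ c ∈ Finset.univ, ∑ d, Ωinv u a c * Ωinv u b d * Ω u d c
        = Ωinv u a c * (if b = c then 1 else 0) := by
      intro c _
      rw [← hinv₂ u b c, Finset.mul_sum]
      exact Finset.sum_congr rfl fun d _ => by ring
    rw [Finset.sum_congr rfl h]
    simp
  have C : ∑ c, ∑ d, Ωinv u a c * Ωinv u b d * (∑ k, ξ k u c * ξ k u d)
      = ∑ k, theta ξ Ωinv k u a * theta ξ Ωinv k u b := by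
    have h : ∀ c ∈ Finset.univ, ∑ d, Ωinv u a c * Ωinv u b d * (∑ k, ξ k u c * ξ k u d)
        = ∑ k, ∑ d, (Ωinv u a c * ξ k u c) * (Ωinv u b d * ξ k u d) := by
      intro c _
      rw [Finset.sum_comm]
      refine Finset.sum_congr rfl fun d _ => ?_
      rw [Finset.mul_sum]
      exact Finset.sum_congr rfl fun k _ => by ring
    rw [Finset.sum_congr rfl h, Finset.sum_comm]
    refine Finset.sum_congr rfl fun k _ => ?_
    rw [theta, theta, Finset.sum_mul_sum]
  calc Ωinv u a b + Ωinv u b a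
      = ∑ c, ∑ d, (Ωinv u a c * Ωinv u b d * Ω u d c
          + Ωinv u a c * Ωinv u b d * Ω u c d) := by
        rw [← A, ← B, ← Finset.sum_add_distrib]
        exact Finset.sum_congr rfl fun c _ => (Finset.sum_add_distrib).symm
    _ = ∑ c, ∑ d, Ωinv u a c * Ωinv u b d * (∑ k, ξ k u c * ξ k u d) := by
        refine Finset.sum_congr rfl fun c _ => Finset.sum_congr rfl fun d _ => ?_
        rw [← hconstr u c d]
        ring
    _ = ∑ k, theta ξ Ωinv k u a * theta ξ Ωinv k u b := C


lemma Sq_theta (i j : Fin N) (u : Fin N → ℝ) :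
    Sq ξ ξs Ωinv i j u = ∑ a, ξs j u a * theta ξ Ωinv i u a := by
  refine Finset.sum_congr rfl fun a _ => ?_
  rw [theta, Finset.mul_sum]
  exact Finset.sum_congr rfl fun b _ => by ring

lemma Sq_eta (i j : Fin N) (u : Fin N → ℝ) :
    Sq ξ ξs Ωinv i j u = ∑ b, eta ξs Ωinv j u b * ξ i u b := by
  rw [Sq, Finset.sum_comm]
  refine Finset.sum_congr rfl fun b _ => ?_
  rw [eta, Finset.sum_mul]

lemma Tq_eta (i j : Fin N) (u : Fin N → ℝ) :
    Tq ξs Ωinv i j u = ∑ b, eta ξs Ωinv j u b * ξs i u b := by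
  rw [Tq, Finset.sum_comm]
  refine Finset.sum_congr rfl fun b _ => ?_
  rw [eta, Finset.sum_mul]

lemma pd_Sq_parts
    (hξ : ∀ i a, ContDiff ℝ (⊤ : ℕ∞) (fun u => ξ i u a))
    (hξssm : ∀ i a, ContDiff ℝ (⊤ : ℕ∞) (fun u => ξs i u a))
    (hΩinvsm : ∀ a b, ContDiff ℝ (⊤ : ℕ∞) (fun u => Ωinv u a b))
    (hOi : ∀ p (u : Fin N → ℝ) (a d : Fin M),
      pd p (fun v => Ωinv v a d) u = -(theta ξ Ωinv p u a * eta ξs Ωinv p u d)) :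
    ∀ p i j (u : Fin N → ℝ),
      pd p (Sq ξ ξs Ωinv i j) u
        = (∑ a, pd p (fun v => ξs j v a) u * theta ξ Ωinv i u a)
          - Sq ξ ξs Ωinv p j u * Sq ξ ξs Ωinv i p u
          + ∑ b, eta ξs Ωinv j u b * pd p (fun v => ξ i v b) u := by
  intro p i j u
  have dξ : ∀ q c v, DifferentiableAt ℝ (fun w => ξ q w c) v :=
    fun q c v => ((hξ q c).differentiable (by simp)).differentiableAt
  have dξs : ∀ q c v, DifferentiableAt ℝ (fun w => ξs q w c) v :=
    fun q c v => ((hξssm q c).differentiable (by simp)).differentiableAt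
  have dΩinv : ∀ c b v, DifferentiableAt ℝ (fun w => Ωinv w c b) v :=
    fun c b v => ((hΩinvsm c b).differentiable (by simp)).differentiableAt
  have h1 : pd p (Sq ξ ξs Ωinv i j) u
      = ∑ a, ∑ b, (pd p (fun v => ξs j v a) u * Ωinv u a b * ξ i u b
          - ξs j u a * theta ξ Ωinv p u a * (eta ξs Ωinv p u b * ξ i u b)
          + ξs j u a * Ωinv u a b * pd p (fun v => ξ i v b) u) := by
    show pd p (fun v => ∑ a, ∑ b, ξs j v a * Ωinv v a b * ξ i v b) u = _
    rw [pd_sum (fun a _ => DifferentiableAt.fun_sum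
      (fun b _ => ((dξs j a u).fun_mul (dΩinv a b u)).fun_mul (dξ i b u))) p]
    refine Finset.sum_congr rfl fun a _ => ?_
    rw [pd_sum (fun b _ => ((dξs j a u).fun_mul (dΩinv a b u)).fun_mul (dξ i b u)) p]
    refine Finset.sum_congr rfl fun b _ => ?_
    rw [pd_mul ((dξs j a u).fun_mul (dΩinv a b u)) (dξ i b u) p,
      pd_mul (dξs j a u) (dΩinv a b u) p, hOi p u a b]
    ring
  have G1 : ∑ a, ∑ b, pd p (fun v => ξs j v a) u * Ωinv u a b * ξ i u b
      = ∑ a, pd p (fun v => ξs j v a) u * theta ξ Ωinv i u a := by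
    refine Finset.sum_congr rfl fun a _ => ?_
    rw [theta, Finset.mul_sum]
    exact Finset.sum_congr rfl fun b _ => by ring
  have G2 : ∑ a, ∑ b, ξs j u a * theta ξ Ωinv p u a * (eta ξs Ωinv p u b * ξ i u b)
      = Sq ξ ξs Ωinv p j u * Sq ξ ξs Ωinv i p u := by
    rw [Sq_theta ξ ξs Ωinv p j u, Sq_eta ξ ξs Ωinv i p u, Finset.sum_mul_sum]
  have G3 : ∑ a, ∑ b, ξs j u a * Ωinv u a b * pd p (fun v => ξ i v b) u
      = ∑ b, eta ξs Ωinv j u b * pd p (fun v => ξ i v b) u := by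
    rw [Finset.sum_comm]
    refine Finset.sum_congr rfl fun b _ => ?_
    rw [eta, Finset.sum_mul]
  rw [h1]
  simp only [Finset.sum_add_distrib, Finset.sum_sub_distrib]
  rw [G1, G2, G3]


lemma pd_Sq_off
    (hξ : ∀ i a, ContDiff ℝ (⊤ : ℕ∞) (fun u => ξ i u a))
    (hξssm : ∀ i a, ContDiff ℝ (⊤ : ℕ∞) (fun u => ξs i u a))
    (hΩinvsm : ∀ a b, ContDiff ℝ (⊤ : ℕ∞) (fun u => Ωinv u a b))
    (hOi : ∀ p (u : Fin N → ℝ) (a d : Fin M),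
      pd p (fun v => Ωinv v a d) u = -(theta ξ Ωinv p u a * eta ξs Ωinv p u d))
    (hdirect : ∀ i j, i ≠ j → ∀ (u : Fin N → ℝ) (a : Fin M),
      pd i (fun v => ξ j v a) u = β j i u * ξ i u a)
    (hadj : ∀ i j, i ≠ j → ∀ (u : Fin N → ℝ) (a : Fin M),
      pd i (fun v => ξs j v a) u = β i j u * ξs i u a)
    {i j k : Fin N} (hkj : k ≠ j) (hki : k ≠ i) (u : Fin N → ℝ) :
    pd k (Sq ξ ξs Ωinv i j) u
      = β k j u * Sq ξ ξs Ωinv i k u + β i k u * Sq ξ ξs Ωinv k j u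
        - Sq ξ ξs Ωinv k j u * Sq ξ ξs Ωinv i k u := by
  rw [pd_Sq_parts ξ ξs Ωinv hξ hξssm hΩinvsm hOi k i j u]
  have A : ∑ a, pd k (fun v => ξs j v a) u * theta ξ Ωinv i u a
      = β k j u * Sq ξ ξs Ωinv i k u := by
    rw [Sq_theta, Finset.mul_sum]
    exact Finset.sum_congr rfl fun a _ => by rw [hadj k j hkj u a]; ring
  have C : ∑ b, eta ξs Ωinv j u b * pd k (fun v => ξ i v b) u
      = β i k u * Sq ξ ξs Ωinv k j u := by
    rw [Sq_eta, Finset.mul_sum]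
    exact Finset.sum_congr rfl fun b _ => by rw [hdirect k i hki u b]; ring
  rw [A, C]
  ring

lemma pd_Sq_diag
    (hξ : ∀ i a, ContDiff ℝ (⊤ : ℕ∞) (fun u => ξ i u a))
    (hξssm : ∀ i a, ContDiff ℝ (⊤ : ℕ∞) (fun u => ξs i u a))
    (hΩinvsm : ∀ a b, ContDiff ℝ (⊤ : ℕ∞) (fun u => Ωinv u a b))
    (hOi : ∀ p (u : Fin N → ℝ) (a d : Fin M),
      pd p (fun v => Ωinv v a d) u = -(theta ξ Ωinv p u a * eta ξs Ωinv p u d))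
    (hξs : ∀ i (u : Fin N → ℝ) (a : Fin M),
      ξs i u a = pd i (fun v => ξ i v a) u
        + ∑ k ∈ Finset.univ.filter (fun k => k ≠ i), ξ k u a * β k i u)
    (hadj : ∀ i j, i ≠ j → ∀ (u : Fin N → ℝ) (a : Fin M),
      pd i (fun v => ξs j v a) u = β i j u * ξs i u a)
    {i j : Fin N} (hij : i ≠ j) (u : Fin N → ℝ) :
    pd i (Sq ξ ξs Ωinv i j) u
      = β i j u * Sq ξ ξs Ωinv i i u - Sq ξ ξs Ωinv i j u * Sq ξ ξs Ωinv i i u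
        + Tq ξs Ωinv i j u
        - ∑ k ∈ Finset.univ.filter (fun k => k ≠ i), β k i u * Sq ξ ξs Ωinv k j u := by
  rw [pd_Sq_parts ξ ξs Ωinv hξ hξssm hΩinvsm hOi i i j u]
  have A : ∑ a, pd i (fun v => ξs j v a) u * theta ξ Ωinv i u a
      = β i j u * Sq ξ ξs Ωinv i i u := by
    rw [Sq_theta, Finset.mul_sum]
    exact Finset.sum_congr rfl fun a _ => by rw [hadj i j hij u a]; ring
  have C : ∑ b, eta ξs Ωinv j u b * pd i (fun v => ξ i v b) u
      = Tq ξs Ωinv i j u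
        - ∑ k ∈ Finset.univ.filter (fun k => k ≠ i), β k i u * Sq ξ ξs Ωinv k j u := by
    have hpd : ∀ b, pd i (fun v => ξ i v b) u
        = ξs i u b - ∑ k ∈ Finset.univ.filter (fun k => k ≠ i), ξ k u b * β k i u := by
      intro b; rw [hξs i u b]; ring
    calc ∑ b, eta ξs Ωinv j u b * pd i (fun v => ξ i v b) u
        = ∑ b, (eta ξs Ωinv j u b * ξs i u b
            - ∑ k ∈ Finset.univ.filter (fun k => k ≠ i),
                eta ξs Ωinv j u b * (ξ k u b * β k i u)) := by
          refine Finset.sum_congr rfl fun b _ => ?_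
          rw [hpd b, mul_sub, Finset.mul_sum]
      _ = Tq ξs Ωinv i j u
            - ∑ k ∈ Finset.univ.filter (fun k => k ≠ i), β k i u * Sq ξ ξs Ωinv k j u := by
          rw [Finset.sum_sub_distrib, ← Tq_eta, Finset.sum_comm]
          congr 1
          refine Finset.sum_congr rfl fun k _ => ?_
          rw [Sq_eta, Finset.mul_sum]
          exact Finset.sum_congr rfl fun b _ => by ring
  rw [A, C]
  ring


lemma Tq_symm
    (hconstr : ∀ (u : Fin N → ℝ) (a b : Fin M),
      Ω u a b + Ω u b a = ∑ k, ξ k u a * ξ k u b)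
    (hinv₂ : ∀ (u : Fin N → ℝ) (a b : Fin M),
      ∑ c, Ωinv u a c * Ω u c b = if a = b then 1 else 0) :
    ∀ (u : Fin N → ℝ) (i j : Fin N),
      Tq ξs Ωinv i j u + Tq ξs Ωinv j i u
        = ∑ k, Sq ξ ξs Ωinv k i u * Sq ξ ξs Ωinv k j u := by
  intro u i j
  have hsym := omegainv_symm ξ Ω Ωinv hconstr hinv₂
  have h2 : Tq ξs Ωinv j i u = ∑ a, ∑ b, ξs j u a * ξs i u b * Ωinv u b a := by
    rw [Tq, Finset.sum_comm]
    exact Finset.sum_congr rfl fun a _ => Finset.sum_congr rfl fun b _ => by ring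
  have h1 : Tq ξs Ωinv i j u + Tq ξs Ωinv j i u
      = ∑ a, ∑ b, ξs j u a * ξs i u b * (Ωinv u a b + Ωinv u b a) := by
    rw [h2, Tq, ← Finset.sum_add_distrib]
    refine Finset.sum_congr rfl fun a _ => ?_
    rw [← Finset.sum_add_distrib]
    exact Finset.sum_congr rfl fun b _ => by ring
  rw [h1]
  have step1 : ∀ a ∈ Finset.univ, ∑ b, ξs j u a * ξs i u b * (Ωinv u a b + Ωinv u b a)
      = ∑ k, ∑ b, (ξs j u a * theta ξ Ωinv k u a) * (ξs i u b * theta ξ Ωinv k u b) := by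
    intro a _
    rw [Finset.sum_comm]
    refine Finset.sum_congr rfl fun b _ => ?_
    rw [hsym u a b, Finset.mul_sum]
    exact Finset.sum_congr rfl fun k _ => by ring
  rw [Finset.sum_congr rfl step1, Finset.sum_comm]
  refine Finset.sum_congr rfl fun k _ => ?_
  rw [mul_comm (Sq ξ ξs Ωinv k i u), Sq_theta ξ ξs Ωinv k j u, Sq_theta ξ ξs Ωinv k i u,
    Finset.sum_mul_sum]

end Rib

/-- Main theorem: the vectorial Ribaucour transformation preserves the Lamé equations. -/
theorem ribaucour_preserves_lame
    {N M : ℕ}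
    (β : Fin N → Fin N → (Fin N → ℝ) → ℝ)
    (ξ : Fin N → (Fin N → ℝ) → Fin M → ℝ)
    (ξs : Fin N → (Fin N → ℝ) → Fin M → ℝ)
    (Ω Ωinv : (Fin N → ℝ) → Fin M → Fin M → ℝ)
    (βh : Fin N → Fin N → (Fin N → ℝ) → ℝ)
    (hβ : ∀ i j, i ≠ j → ContDiff ℝ (⊤ : ℕ∞) (β i j))
    (hξ : ∀ i a, ContDiff ℝ (⊤ : ℕ∞) (fun u => ξ i u a))
    (hΩsm : ∀ a b, ContDiff ℝ (⊤ : ℕ∞) (fun u => Ω u a b))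
    (hΩinvsm : ∀ a b, ContDiff ℝ (⊤ : ℕ∞) (fun u => Ωinv u a b))
    -- Lamé equations
    (hLame1 : ∀ i j k, i ≠ j → j ≠ k → i ≠ k → ∀ u : Fin N → ℝ,
      pd k (β i j) u = β i k u * β k j u)
    (hLame2 : ∀ i j, i ≠ j → ∀ u : Fin N → ℝ,
      pd i (β i j) u + pd j (β j i) u
        + ∑ k ∈ Finset.univ.filter (fun k => k ≠ i ∧ k ≠ j), β k i u * β k j u = 0)
    -- direct system
    (hdirect : ∀ i j, i ≠ j → ∀ (u : Fin N → ℝ) (a : Fin M),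
      pd i (fun v => ξ j v a) u = β j i u * ξ i u a)
    -- Ribaucour prescription for the adjoint
    (hξs : ∀ i (u : Fin N → ℝ) (a : Fin M),
      ξs i u a = pd i (fun v => ξ i v a) u
        + ∑ k ∈ Finset.univ.filter (fun k => k ≠ i), ξ k u a * β k i u)
    -- potential and symmetry constraint
    (hΩ : ∀ i (u : Fin N → ℝ) (a b : Fin M),
      pd i (fun v => Ω v a b) u = ξ i u a * ξs i u b)
    (hconstr : ∀ (u : Fin N → ℝ) (a b : Fin M),
      Ω u a b + Ω u b a = ∑ k, ξ k u a * ξ k u b)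
    (hinv₁ : ∀ (u : Fin N → ℝ) (a b : Fin M),
      ∑ c, Ω u a c * Ωinv u c b = if a = b then 1 else 0)
    (hinv₂ : ∀ (u : Fin N → ℝ) (a b : Fin M),
      ∑ c, Ωinv u a c * Ω u c b = if a = b then 1 else 0)
    -- transformed rotation coefficients
    (hβh : ∀ i j (u : Fin N → ℝ),
      βh i j u = β i j u - ∑ a, ∑ b, ξs j u a * Ωinv u a b * ξ i u b) :
    (∀ i j k, i ≠ j → j ≠ k → i ≠ k → ∀ u : Fin N → ℝ,
        pd k (βh i j) u = βh i k u * βh k j u)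
    ∧ (∀ i j, i ≠ j → ∀ u : Fin N → ℝ,
        pd i (βh i j) u + pd j (βh j i) u
          + ∑ k ∈ Finset.univ.filter (fun k => k ≠ i ∧ k ≠ j),
              βh k i u * βh k j u = 0) := by
  have hξssm : ∀ i a, ContDiff ℝ (⊤ : ℕ∞) (fun u => ξs i u a) := xis_smooth β ξ ξs hβ hξ hξs
  have hadj : ∀ i j, i ≠ j → ∀ (u : Fin N → ℝ) (a : Fin M),
      pd i (fun v => ξs j v a) u = β i j u * ξs i u a :=
    adjoint_system β ξ ξs hβ hξ hLame1 hLame2 hdirect hξs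
  have hOi : ∀ p (u : Fin N → ℝ) (a d : Fin M),
      pd p (fun v => Ωinv v a d) u = -(theta ξ Ωinv p u a * eta ξs Ωinv p u d) :=
    pd_Omega_inv ξ ξs Ω Ωinv hξ hΩsm hΩinvsm hΩ hinv₁ hinv₂
  have hβhS : ∀ i j (u : Fin N → ℝ), βh i j u = β i j u - Sq ξ ξs Ωinv i j u :=
    fun i j u => hβh i j u
  have hβhf : ∀ i j, βh i j = fun u => β i j u - Sq ξ ξs Ωinv i j u :=
    fun i j => funext fun u => hβhS i j u
  have hSsm : ∀ i j, ContDiff ℝ (⊤ : ℕ∞) (Sq ξ ξs Ωinv i j) := by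
    intro i j
    show ContDiff ℝ (⊤ : ℕ∞) (fun u => ∑ a, ∑ b, ξs j u a * Ωinv u a b * ξ i u b)
    exact ContDiff.sum fun a _ => ContDiff.sum fun b _ =>
      ((hξssm j a).mul (hΩinvsm a b)).mul (hξ i b)
  have dβ : ∀ p q, p ≠ q → ∀ v, DifferentiableAt ℝ (β p q) v :=
    fun p q h v => ((hβ p q h).differentiable (by simp)).differentiableAt
  have dS : ∀ i j v, DifferentiableAt ℝ (Sq ξ ξs Ωinv i j) v :=
    fun i j v => ((hSsm i j).differentiable (by simp)).differentiableAt
  constructor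
  · intro i j k hij hjk hik u
    rw [hβhf i j, pd_sub (dβ i j hij u) (dS i j u) k, hLame1 i j k hij hjk hik u,
      pd_Sq_off β ξ ξs Ωinv hξ hξssm hΩinvsm hOi hdirect hadj hjk.symm hik.symm u,
      hβhS i k u, hβhS k j u]
    ring
  · intro i j hij u
    rw [hβhf i j, hβhf j i, pd_sub (dβ i j hij u) (dS i j u) i,
      pd_sub (dβ j i hij.symm u) (dS j i u) j,
      pd_Sq_diag β ξ ξs Ωinv hξ hξssm hΩinvsm hOi hξs hadj hij u,
      pd_Sq_diag β ξ ξs Ωinv hξ hξssm hΩinvsm hOi hξs hadj hij.symm u]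
    have hfc : Finset.univ.filter (fun k : Fin N => k ≠ j ∧ k ≠ i)
        = Finset.univ.filter (fun k => k ≠ i ∧ k ≠ j) := by
      apply Finset.filter_congr; intro k _; simp [and_comm]
    have hsplit1 : ∑ k ∈ Finset.univ.filter (fun k => k ≠ i), β k i u * Sq ξ ξs Ωinv k j u
        = β j i u * Sq ξ ξs Ωinv j j u
          + ∑ k ∈ Finset.univ.filter (fun k => k ≠ i ∧ k ≠ j),
              β k i u * Sq ξ ξs Ωinv k j u := by
      rw [sum_split_ne hij.symm (fun k => β k i u * Sq ξ ξs Ωinv k j u), hfc]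
    have hsplit2 : ∑ k ∈ Finset.univ.filter (fun k => k ≠ j), β k j u * Sq ξ ξs Ωinv k i u
        = β i j u * Sq ξ ξs Ωinv i i u
          + ∑ k ∈ Finset.univ.filter (fun k => k ≠ i ∧ k ≠ j),
              β k j u * Sq ξ ξs Ωinv k i u := by
      rw [sum_split_ne hij (fun k => β k j u * Sq ξ ξs Ωinv k i u)]
    have hexp : ∑ k ∈ Finset.univ.filter (fun k => k ≠ i ∧ k ≠ j),
          (β k i u - Sq ξ ξs Ωinv k i u) * (β k j u - Sq ξ ξs Ωinv k j u)
        = ((∑ k ∈ Finset.univ.filter (fun k => k ≠ i ∧ k ≠ j), β k i u * β k j u)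
          - ∑ k ∈ Finset.univ.filter (fun k => k ≠ i ∧ k ≠ j), β k i u * Sq ξ ξs Ωinv k j u)
          - ((∑ k ∈ Finset.univ.filter (fun k => k ≠ i ∧ k ≠ j), β k j u * Sq ξ ξs Ωinv k i u)
          - ∑ k ∈ Finset.univ.filter (fun k => k ≠ i ∧ k ≠ j),
              Sq ξ ξs Ωinv k i u * Sq ξ ξs Ωinv k j u) := by
      rw [← Finset.sum_sub_distrib, ← Finset.sum_sub_distrib, ← Finset.sum_sub_distrib]
      exact Finset.sum_congr rfl fun k _ => by ring
    have hT : Tq ξs Ωinv i j u + Tq ξs Ωinv j i u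
        = Sq ξ ξs Ωinv i i u * Sq ξ ξs Ωinv i j u
          + Sq ξ ξs Ωinv j i u * Sq ξ ξs Ωinv j j u
          + ∑ k ∈ Finset.univ.filter (fun k => k ≠ i ∧ k ≠ j),
              Sq ξ ξs Ωinv k i u * Sq ξ ξs Ωinv k j u := by
      rw [Tq_symm ξ ξs Ω Ωinv hconstr hinv₂ u i j,
        sum_split_univ hij (fun k => Sq ξ ξs Ωinv k i u * Sq ξ ξs Ωinv k j u)]
    have hbh : ∑ k ∈ Finset.univ.filter (fun k => k ≠ i ∧ k ≠ j), βh k i u * βh k j u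
        = ∑ k ∈ Finset.univ.filter (fun k => k ≠ i ∧ k ≠ j),
            (β k i u - Sq ξ ξs Ωinv k i u) * (β k j u - Sq ξ ξs Ωinv k j u) :=
      Finset.sum_congr rfl fun k _ => by rw [hβhS k i u, hβhS k j u]
    rw [hbh, hexp]
    linear_combination hLame2 i j hij u - hT + hsplit1 + hsplit2
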